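/- arXiv:1204.3290 — 4 statements merged into one kernel-verified Lean document; each statement's English description precedes it below -/
import Mathlib

section
/- Let 0 < a < b with ab = rs. Then for every measurable function f : ℝ² → [0, ∞], the change-of-variables formula ∫_{A_p(a,b)} f(K(x)) dx = ∫_{A_p(a,b)} f(x) · r²s²/‖x − p‖⁴ dx holds (both sides possibly infinite). -/
open MeasureTheory
open scoped ENNReal NNReal

/-- The Kelvin transform centered at `p` with parameter `r * s`. -/
noncomputable def kelvin (p : EuclideanSpace ℝ (Fin 2)) (r s : ℝ)
    (x : EuclideanSpace ℝ (Fin 2)) : EuclideanSpace ℝ (Fin 2) :=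
  p + (r * s / ‖x - p‖ ^ 2) • (x - p)

/-- The open annulus of radii `a < b` centered at `p`. -/
def annulus (p : EuclideanSpace ℝ (Fin 2)) (a b : ℝ) :
    Set (EuclideanSpace ℝ (Fin 2)) :=
  {x | a < ‖x - p‖ ∧ ‖x - p‖ < b}

/-!
The Kelvin transform is the inversion in the circle of radius `R = √(rs)` about `p`. The
derivative of an inversion at `x` is `(R / |x - p|)²` times a reflection, so its Jacobian has
absolute value `(R / |x - p|)^(2n)` in dimension `n`, and the general change of variables formula
applies on any region avoiding the center. When `ab = R²` the inversion maps the annulus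
`A_p(a, b)` onto itself, since it sends the radius `ρ` to `ab / ρ`.
-/

open EuclideanGeometry Module

namespace EuclideanGeometry

variable {F : Type*} [NormedAddCommGroup F] [InnerProductSpace ℝ F] [FiniteDimensional ℝ F]
  {c : F} {R : ℝ}

theorem abs_det_fderiv_inversion {x : F} (hx : x ≠ c) :
    |(fderiv ℝ (inversion c R) x).det| = (R / dist x c) ^ (2 * finrank ℝ F) := by
  have hrefl : LinearMap.det (((ℝ ∙ (x - c))ᗮ.reflection : F →L[ℝ] F) : F →ₗ[ℝ] F) =
      (-1) ^ finrank ℝ (ℝ ∙ (x - c))ᗮᗮ :=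
    Submodule.det_reflection _
  rw [(hasFDerivAt_inversion hx).fderiv, ContinuousLinearMap.det,
    ContinuousLinearMap.toLinearMap_smul, LinearMap.det_smul, hrefl, abs_mul,
    abs_neg_one_pow, mul_one, abs_of_nonneg (by positivity), ← pow_mul]

variable [MeasurableSpace F] [BorelSpace F] (μ : Measure F) [μ.IsAddHaarMeasure]

theorem lintegral_comp_inversion {s : Set F} (hs : MeasurableSet s) (hc : c ∉ s) (hR : R ≠ 0)
    (f : F → ℝ≥0∞) :
    ∫⁻ x in s, f (inversion c R x) ∂μ =
      ∫⁻ x in inversion c R '' s,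
        f x * ENNReal.ofReal ((R / dist x c) ^ (2 * finrank ℝ F)) ∂μ := by
  have hne : ∀ x ∈ s, x ≠ c := fun x hx h => hc (h ▸ hx)
  rw [lintegral_image_eq_lintegral_abs_det_fderiv_mul μ hs
    (fun x hx => (hasFDerivAt_inversion (hne x hx)).differentiableAt.hasFDerivAt.hasFDerivWithinAt)
    (inversion_injective c hR).injOn]
  refine setLIntegral_congr_fun hs fun x hx => ?_
  have hd : dist x c ≠ 0 := dist_ne_zero.2 (hne x hx)
  -- the Jacobians of `inversion c R` at `x` and at its image are reciprocal
  have hJ : R / dist x c * (R / dist (inversion c R x) c) = 1 := by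
    rw [dist_inversion_center]
    field_simp
  rw [abs_det_fderiv_inversion (hne x hx), mul_left_comm,
    ← ENNReal.ofReal_mul ((even_two_mul _).pow_nonneg _), ← mul_pow, hJ, one_pow,
    ENNReal.ofReal_one, mul_one]

end EuclideanGeometry

theorem kelvin_eq_inversion (p : EuclideanSpace ℝ (Fin 2)) {r s R : ℝ} (hR : R ^ 2 = r * s) :
    kelvin p r s = inversion p R := by
  funext x
  simp only [kelvin, inversion_def, vsub_eq_sub, vadd_eq_add, dist_eq_norm, div_pow, hR]
  abel

theorem isOpen_annulus (p : EuclideanSpace ℝ (Fin 2)) (a b : ℝ) : IsOpen (annulus p a b) :=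
  isOpen_Ioo.preimage (continuous_id.sub continuous_const).norm

theorem center_notMem_annulus (p : EuclideanSpace ℝ (Fin 2)) {a : ℝ} (ha : 0 ≤ a) (b : ℝ) :
    p ∉ annulus p a b := by
  simp [annulus, ha.not_gt]

theorem mapsTo_inversion_annulus (p : EuclideanSpace ℝ (Fin 2)) {a b R : ℝ} (ha : 0 < a)
    (hb : 0 < b) (habR : a * b = R ^ 2) :
    Set.MapsTo (inversion p R) (annulus p a b) (annulus p a b) := by
  rintro x ⟨hax, hxb⟩
  have hx : 0 < ‖x - p‖ := ha.trans hax
  have hdist : ‖inversion p R x - p‖ = a * b / ‖x - p‖ := by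
    rw [← dist_eq_norm, dist_inversion_center, dist_eq_norm, habR]
  constructor <;> rw [hdist]
  · rw [lt_div_iff₀ hx]; nlinarith
  · rw [div_lt_iff₀ hx]; nlinarith

theorem inversion_image_annulus (p : EuclideanSpace ℝ (Fin 2)) {a b R : ℝ} (ha : 0 < a)
    (hb : 0 < b) (habR : a * b = R ^ 2) :
    inversion p R '' annulus p a b = annulus p a b := by
  have hR : R ≠ 0 := by rintro rfl; nlinarith
  have hmaps := mapsTo_inversion_annulus p ha hb habR
  refine hmaps.image_subset.antisymm ?_
  rw [(inversion_involutive p hR).image_eq_preimage_symm]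
  exact hmaps

theorem kelvin_change_of_variables_general (p : EuclideanSpace ℝ (Fin 2)) (r s a b : ℝ)
    (ha : 0 < a) (hab : a < b) (habrs : a * b = r * s)
    (f : EuclideanSpace ℝ (Fin 2) → ℝ≥0∞) :
    ∫⁻ x in annulus p a b, f (kelvin p r s x) =
      ∫⁻ x in annulus p a b,
        f x * ENNReal.ofReal (r ^ 2 * s ^ 2 / ‖x - p‖ ^ 4) := by
  have hb : 0 < b := ha.trans hab
  set R := √(r * s)
  have hR : R ^ 2 = r * s := Real.sq_sqrt (habrs ▸ (mul_pos ha hb).le)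
  have hA := (isOpen_annulus p a b).measurableSet
  rw [kelvin_eq_inversion p hR,
    lintegral_comp_inversion volume hA (center_notMem_annulus p ha.le b)
      (Real.sqrt_ne_zero'.2 (habrs ▸ mul_pos ha hb)),
    inversion_image_annulus p ha hb (habrs.trans hR.symm), finrank_euclideanSpace_fin]
  refine setLIntegral_congr_fun hA fun x _ => ?_
  rw [dist_eq_norm, div_pow, pow_mul, hR, mul_pow]

theorem kelvin_change_of_variables (p : EuclideanSpace ℝ (Fin 2)) (r s a b : ℝ)
    (hr : 0 < r) (hs : 0 < s) (ha : 0 < a) (hab : a < b) (habrs : a * b = r * s)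
    (f : EuclideanSpace ℝ (Fin 2) → ℝ≥0∞) (hf : Measurable f) :
    ∫⁻ x in annulus p a b, f (kelvin p r s x) =
      ∫⁻ x in annulus p a b,
        f x * ENNReal.ofReal (r ^ 2 * s ^ 2 / ‖x - p‖ ^ 4) :=
  kelvin_change_of_variables_general p r s a b ha hab habrs f
end

section
/- Let (X, d) be a connected metric space and μ a finite Borel measure on X with μ(U) > 0 for every nonempty open set U. Fix R0 > 1 and let σ : X → (0, ∞) be such that for every x ∈ X, μ(B(x, σ(x))) = μ({y ∈ X : d(x, y) ≥ R0·σ(x)}), where B(x, ρ) is the open ball. Then for all x, y ∈ X, d(x, y) ≤ R0·max{σ(x), σ(y)} + min{σ(x), σ(y)}. -/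
/-!
Suppose `σ y ≤ σ x` and `dist x y > R0 σ x + σ y`. Then `B(y, σ y) ⊆ {R0 σ x ≤ d(x, ·)}` and
`B(x, σ x) ⊆ {R0 σ y ≤ d(y, ·)}`, so the balancing condition at `x` and at `y` forces the open set
`{R0 σ x < d(x, ·)} ∩ {σ y < d(y, ·)}` to have measure zero, hence to be empty. The space would then
be the union of the two disjoint closed balls `B̄(x, R0 σ x)` and `B̄(y, σ y)`, contradicting
connectedness.
-/

open MeasureTheory Metric

lemma exists_lt_dist_and_lt_dist_of_add_lt_dist {X : Type*} [MetricSpace X] [ConnectedSpace X]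
    {x y : X} {r s : ℝ} (hr : 0 ≤ r) (hs : 0 ≤ s) (h : r + s < dist x y) :
    ∃ z, r < dist x z ∧ s < dist y z := by
  by_contra! hcover
  obtain ⟨z, -, hz⟩ := isPreconnected_closed_iff.mp isPreconnected_univ
    (closedBall x r) (closedBall y s) isClosed_closedBall isClosed_closedBall
    (fun z _ ↦ by
      by_cases hz : dist x z ≤ r
      · exact Or.inl (by rwa [mem_closedBall, dist_comm])
      · exact Or.inr (by rw [mem_closedBall, dist_comm]; exact hcover z (not_le.mp hz)))
    ⟨x, trivial, mem_closedBall_self hr⟩ ⟨y, trivial, mem_closedBall_self hs⟩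
  exact (closedBall_disjoint_closedBall h).le_bot hz

lemma IsOpen.eq_empty_of_measure_union_le {X : Type*} [TopologicalSpace X] [MeasurableSpace X]
    {μ : Measure X} [μ.IsOpenPosMeasure] {U V : Set X} (hU : IsOpen U) (hV : MeasurableSet V)
    (hV_fin : μ V ≠ ⊤) (hUV : Disjoint U V) (hle : μ (U ∪ V) ≤ μ V) : U = ∅ := by
  rw [← hU.measure_eq_zero_iff μ, ← nonpos_iff_eq_zero]
  refine ENNReal.le_of_add_le_add_right hV_fin ?_
  rwa [← measure_union hUV hV, zero_add]

lemma dist_le_mul_add_of_measure_ball_eq {X : Type*} [MetricSpace X] [MeasurableSpace X]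
    [OpensMeasurableSpace X] [ConnectedSpace X] {μ : Measure X} [IsFiniteMeasure μ]
    [μ.IsOpenPosMeasure] {R0 a b : ℝ} (hR0 : 1 ≤ R0) (hb : 0 ≤ b) (hba : b ≤ a) {x y : X}
    (hx : μ (ball x a) = μ {z | R0 * a ≤ dist x z})
    (hy : μ (ball y b) = μ {z | R0 * b ≤ dist y z}) :
    dist x y ≤ R0 * a + b := by
  by_contra! hxy
  obtain ⟨z, hxz, hyz⟩ := exists_lt_dist_and_lt_dist_of_add_lt_dist
    (mul_nonneg (by linarith) (hb.trans hba)) hb hxy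
  set U := {z | R0 * a < dist x z} ∩ {z | b < dist y z}
  have hU_open : IsOpen U :=
    (isOpen_lt continuous_const (continuous_const.dist continuous_id)).inter
      (isOpen_lt continuous_const (continuous_const.dist continuous_id))
  have hU_disj : Disjoint U (ball y b) :=
    Set.disjoint_left.mpr fun _ hw hwb ↦ (mem_ball'.mp hwb).not_gt hw.2
  have hUball : U ∪ ball y b ⊆ {z | R0 * a ≤ dist x z} := by
    rintro w (hw | hw)
    · exact hw.1.out.le
    · have := dist_triangle_right x y w
      have := mem_ball'.mp hw
      show R0 * a ≤ dist x w
      linarith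
  have hball : ball x a ⊆ {z | R0 * b ≤ dist y z} := fun w hw ↦ by
    have := dist_triangle_right x y w
    have := mem_ball'.mp hw
    have : (R0 - 1) * b ≤ (R0 - 1) * a := mul_le_mul_of_nonneg_left hba (by linarith)
    show R0 * b ≤ dist y w
    linarith
  have hle : μ (U ∪ ball y b) ≤ μ (ball y b) :=
    calc μ (U ∪ ball y b) ≤ μ {z | R0 * a ≤ dist x z} := measure_mono hUball
      _ = μ (ball x a) := hx.symm
      _ ≤ μ {z | R0 * b ≤ dist y z} := measure_mono hball
      _ = μ (ball y b) := hy.symm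
  have hU_empty := hU_open.eq_empty_of_measure_union_le measurableSet_ball (measure_ne_top μ _)
    hU_disj hle
  exact hU_empty.subset ⟨hxz, hyz⟩

theorem concentration_scale_distance {X : Type*} [MetricSpace X]
    [MeasurableSpace X] [BorelSpace X] [ConnectedSpace X]
    (μ : Measure X) [IsFiniteMeasure μ]
    (hpos : ∀ U : Set X, IsOpen U → U.Nonempty → 0 < μ U)
    (R0 : ℝ) (hR0 : 1 < R0) (σ : X → ℝ) (hσpos : ∀ x, 0 < σ x)
    (hσ : ∀ x, μ (Metric.ball x (σ x)) = μ {y : X | R0 * σ x ≤ dist x y}) :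
    ∀ x y : X, dist x y ≤ R0 * max (σ x) (σ y) + min (σ x) (σ y) := by
  have : μ.IsOpenPosMeasure := ⟨fun U hU hne ↦ (hpos U hU hne).ne'⟩
  intro x y
  rcases le_total (σ y) (σ x) with h | h
  · rw [max_eq_left h, min_eq_right h]
    exact dist_le_mul_add_of_measure_ball_eq hR0.le (hσpos y).le h (hσ x) (hσ y)
  · rw [max_eq_right h, min_eq_left h, dist_comm]
    exact dist_le_mul_add_of_measure_ball_eq hR0.le (hσpos x).le h (hσ y) (hσ x)
end

section
/- Let (X, d) be a compact metric space and let δ0 > 0, γ0 > 0. Then there exist constants δ̃0 > 0 and γ̃0 > 0, depending only on X, δ0 and γ0, with the following property: for all finite Borel measures μ1, μ2 on X and all Borel sets Ω_{1,1}, Ω_{1,2}, Ω_{2,1}, Ω_{2,2} ⊆ X such that d(Ω_{i,1}, Ω_{i,2}) ≥ δ0 for i = 1, 2 and μ_i(Ω_{i,j}) ≥ γ0·μ_i(X) for all i, j ∈ {1, 2}, there exist Borel sets Ω̃1, Ω̃2 ⊆ X with d(Ω̃1, Ω̃2) ≥ δ̃0 and μ_i(Ω̃_k) ≥ γ̃0·μ_i(X)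 for all i, k ∈ {1, 2}. -/
/-!
Cover `X` by finitely many balls of radius `δ₀ / 8`, say `N` of them. By pigeonhole each
`Ω i j` meets one of these balls in a piece `A i j` carrying at least a `1 / N` share of its
mass, so `μ i (A i j) ≥ (γ₀ / N) μ i X`. The pieces have diameter at most `δ₀ / 4`, and
`A i 1`, `A i 2` stay `δ₀`-apart. Pair them as `(A 1 1 ∪ A 2 1, A 1 2 ∪ A 2 2)`: if this
pairing fails to be `δ₀ / 4`-separated, then a piece of the first measure comes within
`δ₀ / 4` of a piece of the second, and the triangle inequality shows that the crossed pairing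
`(A 1 1 ∪ A 2 2, A 1 2 ∪ A 2 1)` is `δ₀ / 4`-separated instead.
-/

open MeasureTheory Metric ENNReal Set

section Separation

variable {X : Type*} [PseudoMetricSpace X]

/-- The paper's `d(s, t) ≥ δ`. -/
def IsDistSeparated (δ : ℝ) (s t : Set X) : Prop :=
  ∀ x ∈ s, ∀ y ∈ t, δ ≤ dist x y

namespace IsDistSeparated

variable {δ η : ℝ} {s t u v : Set X}

theorem symm (h : IsDistSeparated δ s t) : IsDistSeparated δ t s :=
  fun x hx y hy => dist_comm x y ▸ h y hy x hx

theorem mono_dist (h : IsDistSeparated δ s t) (hηδ : η ≤ δ) : IsDistSeparated η s t :=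
  fun x hx y hy => hηδ.trans (h x hx y hy)

theorem mono (h : IsDistSeparated δ s t) (hu : u ⊆ s) (hv : v ⊆ t) : IsDistSeparated δ u v :=
  fun x hx y hy => h x (hu hx) y (hv hy)

theorem union (hsu : IsDistSeparated δ s u) (hsv : IsDistSeparated δ s v)
    (htu : IsDistSeparated δ t u) (htv : IsDistSeparated δ t v) :
    IsDistSeparated δ (s ∪ t) (u ∪ v) := by
  rintro x (hx | hx) y (hy | hy)
  exacts [hsu x hx y hy, hsv x hx y hy, htu x hx y hy, htv x hx y hy]

/-- If a point of a set `s` of radius `r` comes within `η` of a point of `t`, then `s` inherits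
from `t` its separation from `u`, up to a loss of `η + 2 r`. -/
theorem of_dist_lt {p a b : X} {r : ℝ} (htu : IsDistSeparated δ t u) (hs : s ⊆ closedBall p r)
    (ha : a ∈ s) (hb : b ∈ t) (hab : dist a b < η) :
    IsDistSeparated (δ - η - 2 * r) s u := by
  intro x hx y hy
  have hax : dist a x ≤ 2 * r := by
    have := dist_triangle_right a x p
    have := mem_closedBall.1 (hs ha)
    have := mem_closedBall.1 (hs hx)
    linarith
  have := htu b hb y hy
  have := dist_triangle4 b a x y
  rw [dist_comm b a] at this
  linarith

end IsDistSeparated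

theorem isDistSeparated_union_or {δ η r : ℝ} (hηδ : η ≤ δ) (hηr : 2 * η + 2 * r ≤ δ)
    {A₁ A₂ C₁ C₂ : Set X} {a₁ a₂ c₁ c₂ : X}
    (hA₁ : A₁ ⊆ closedBall a₁ r) (hA₂ : A₂ ⊆ closedBall a₂ r)
    (hC₁ : C₁ ⊆ closedBall c₁ r) (hC₂ : C₂ ⊆ closedBall c₂ r)
    (hA : IsDistSeparated δ A₁ A₂) (hC : IsDistSeparated δ C₁ C₂) :
    IsDistSeparated η (A₁ ∪ C₁) (A₂ ∪ C₂) ∨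
      IsDistSeparated η (A₁ ∪ C₂) (A₂ ∪ C₁) := by
  by_cases h : IsDistSeparated η A₁ C₂ ∧ IsDistSeparated η C₁ A₂
  · exact .inl <| .union (hA.mono_dist hηδ) h.1 h.2 (hC.mono_dist hηδ)
  have hloss : η ≤ δ - η - 2 * r := by linarith
  have crossed : IsDistSeparated η A₁ C₁ ∧ IsDistSeparated η C₂ A₂ := by
    simp only [IsDistSeparated, not_and_or, not_forall, not_le] at h
    rcases h with ⟨a, ha, c, hc, hac⟩ | ⟨c, hc, a, ha, hca⟩
    · exact ⟨(hC.symm.of_dist_lt hA₁ ha hc hac).mono_dist hloss,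
        (hA.of_dist_lt hC₂ hc ha (by rwa [dist_comm])).mono_dist hloss⟩
    · exact ⟨((hA.symm.of_dist_lt hC₁ hc ha hca).mono_dist hloss).symm,
        ((hC.of_dist_lt hA₂ ha hc (by rwa [dist_comm])).mono_dist hloss).symm⟩
  exact .inr <| .union (hA.mono_dist hηδ) crossed.1 crossed.2 (hC.symm.mono_dist hηδ)

end Separation

theorem MeasureTheory.exists_measure_le_card_mul_measure_inter {α ι : Type*} [MeasurableSpace α]
    (μ : Measure α) {s : Finset ι} (hs : s.Nonempty) {U : ι → Set α} {Ω : Set α}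
    (hΩ : Ω ⊆ ⋃ i ∈ s, U i) :
    ∃ i ∈ s, μ Ω ≤ s.card * μ (Ω ∩ U i) := by
  obtain ⟨i, hi, hmax⟩ := s.exists_max_image (fun i => μ (Ω ∩ U i)) hs
  refine ⟨i, hi, ?_⟩
  have hcover : Ω ⊆ ⋃ j ∈ s, Ω ∩ U j := by
    rw [← inter_iUnion₂]
    exact subset_inter le_rfl hΩ
  calc μ Ω ≤ ∑ j ∈ s, μ (Ω ∩ U j) :=
        (measure_mono hcover).trans (measure_biUnion_finset_le s _)
    _ ≤ s.card • μ (Ω ∩ U i) := Finset.sum_le_card_nsmul s _ _ hmax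
    _ = s.card * μ (Ω ∩ U i) := nsmul_eq_mul _ _

theorem ENNReal.ofReal_div_mul_le {γ : ℝ} {n : ℕ} (hn : 0 < n) {m a b : ℝ≥0∞}
    (hma : ENNReal.ofReal γ * m ≤ a) (hab : a ≤ n * b) :
    ENNReal.ofReal (γ / n) * m ≤ b := by
  rw [ENNReal.ofReal_div_of_pos (Nat.cast_pos.2 hn), ofReal_natCast, ← ENNReal.mul_div_right_comm]
  exact ENNReal.div_le_of_le_mul' (hma.trans hab)

theorem exists_measure_inter_ball_ge {X : Type*} [PseudoMetricSpace X] [MeasurableSpace X]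
    (μ : Measure X) {s : Finset X} (hs : s.Nonempty) {r : ℝ}
    (hcov : univ ⊆ ⋃ x ∈ s, ball x r) {γ : ℝ} {Ω : Set X}
    (hΩ : ENNReal.ofReal γ * μ univ ≤ μ Ω) :
    ∃ p, ENNReal.ofReal (γ / s.card) * μ univ ≤ μ (Ω ∩ ball p r) := by
  obtain ⟨p, -, hp⟩ :=
    exists_measure_le_card_mul_measure_inter μ hs ((subset_univ Ω).trans hcov)
  exact ⟨p, ENNReal.ofReal_div_mul_le hs.card_pos hΩ hp⟩

theorem covering_argument {X : Type*} [MetricSpace X] [CompactSpace X]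
    [MeasurableSpace X] [BorelSpace X]
    (δ0 γ0 : ℝ) (hδ0 : 0 < δ0) (hγ0 : 0 < γ0) :
    ∃ δt γt : ℝ, 0 < δt ∧ 0 < γt ∧
      ∀ (μ1 μ2 : Measure X), IsFiniteMeasure μ1 → IsFiniteMeasure μ2 →
      ∀ Ω11 Ω12 Ω21 Ω22 : Set X,
        MeasurableSet Ω11 → MeasurableSet Ω12 →
        MeasurableSet Ω21 → MeasurableSet Ω22 →
        (∀ x ∈ Ω11, ∀ y ∈ Ω12, δ0 ≤ dist x y) →
        (∀ x ∈ Ω21, ∀ y ∈ Ω22, δ0 ≤ dist x y) →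
        ENNReal.ofReal γ0 * μ1 Set.univ ≤ μ1 Ω11 →
        ENNReal.ofReal γ0 * μ1 Set.univ ≤ μ1 Ω12 →
        ENNReal.ofReal γ0 * μ2 Set.univ ≤ μ2 Ω21 →
        ENNReal.ofReal γ0 * μ2 Set.univ ≤ μ2 Ω22 →
        ∃ Ωt1 Ωt2 : Set X, MeasurableSet Ωt1 ∧ MeasurableSet Ωt2 ∧
          (∀ x ∈ Ωt1, ∀ y ∈ Ωt2, δt ≤ dist x y) ∧
          ENNReal.ofReal γt * μ1 Set.univ ≤ μ1 Ωt1 ∧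
          ENNReal.ofReal γt * μ1 Set.univ ≤ μ1 Ωt2 ∧
          ENNReal.ofReal γt * μ2 Set.univ ≤ μ2 Ωt1 ∧
          ENNReal.ofReal γt * μ2 Set.univ ≤ μ2 Ωt2 := by
  rcases isEmpty_or_nonempty X with hX | ⟨⟨x₀⟩⟩
  · refine ⟨1, 1, one_pos, one_pos, fun μ1 μ2 _ _ _ _ _ _ _ _ _ _ _ _ _ _ _ _ => ?_⟩
    exact ⟨∅, ∅, by simp [univ_eq_empty_iff.2 hX]⟩
  set r := δ0 / 8 with hr
  obtain ⟨s, -, hcov⟩ := isCompact_univ.elim_nhds_subcover (fun x : X => ball x r)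
    fun x _ => ball_mem_nhds x (by positivity)
  have hs : s.Nonempty := by
    obtain ⟨p, hp, -⟩ := mem_iUnion₂.1 (hcov (mem_univ x₀))
    exact ⟨p, hp⟩
  refine ⟨δ0 / 4, γ0 / s.card, by positivity, div_pos hγ0 (Nat.cast_pos.2 hs.card_pos), ?_⟩
  intro μ1 μ2 _ _ Ω11 Ω12 Ω21 Ω22 m11 m12 m21 m22 hsep1 hsep2 h11 h12 h21 h22
  obtain ⟨p11, le11⟩ := exists_measure_inter_ball_ge μ1 hs hcov h11
  obtain ⟨p12, le12⟩ := exists_measure_inter_ball_ge μ1 hs hcov h12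
  obtain ⟨p21, le21⟩ := exists_measure_inter_ball_ge μ2 hs hcov h21
  obtain ⟨p22, le22⟩ := exists_measure_inter_ball_ge μ2 hs hcov h22
  have small (Ω : Set X) (p : X) : Ω ∩ ball p r ⊆ closedBall p r :=
    inter_subset_right.trans ball_subset_closedBall
  have meas {Ω : Set X} (hΩ : MeasurableSet Ω) (p : X) : MeasurableSet (Ω ∩ ball p r) :=
    hΩ.inter measurableSet_ball
  rcases isDistSeparated_union_or (δ := δ0) (η := δ0 / 4) (by linarith) (by linarith)
      (small Ω11 p11) (small Ω12 p12) (small Ω21 p21) (small Ω22 p22)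
      (IsDistSeparated.mono hsep1 inter_subset_left inter_subset_left)
      (IsDistSeparated.mono hsep2 inter_subset_left inter_subset_left)
    with h | h
  · exact ⟨_, _, (meas m11 p11).union (meas m21 p21), (meas m12 p12).union (meas m22 p22), h,
      le11.trans (measure_mono subset_union_left), le12.trans (measure_mono subset_union_left),
      le21.trans (measure_mono subset_union_right), le22.trans (measure_mono subset_union_right)⟩
  · exact ⟨_, _, (meas m11 p11).union (meas m22 p22), (meas m12 p12).union (meas m21 p21), h,
      le11.trans (measure_mono subset_union_left), le12.trans (measure_mono subset_union_left),
      le22.trans (measure_mono subset_union_right), le21.trans (measure_mono subset_union_right)⟩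
end

section
/- For all real numbers λ > 0 and R > 0, the function φ : ℝ² → ℝ defined by φ(y) = 2·log(1 + λ²‖y‖²) is differentiable and satisfies ∫_{B(0,R)} ‖Dφ(y)‖² dy = 16π·( log(1 + λ²R²) + (1 + λ²R²)^{−1} − 1 ). -/
/-!
The potential `φ = 2 log (1 + c‖y‖²)` is radial with `‖Dφ(y)‖ = 4c‖y‖ / (1 + c‖y‖²)`, so in polar
coordinates its energy on the disc of radius `R` is `2π ∫₀ᴿ r (4cr / (1 + cr²))² dr`, and
`8 (log (1 + cr²) + (1 + cr²)⁻¹)` is a primitive of this integrand.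
-/

open MeasureTheory Metric Set Real Module

section RadialIntegral

variable {E F : Type*} [NormedAddCommGroup E] [NormedSpace ℝ E] [FiniteDimensional ℝ E]
  [MeasurableSpace E] [BorelSpace E] [NormedAddCommGroup F] [NormedSpace ℝ F]
  [Nontrivial E] (μ : Measure E) [μ.IsAddHaarMeasure]

lemma setIntegral_ball_fun_norm_addHaar (f : ℝ → F) (r : ℝ) :
    ∫ x in ball (0 : E) r, f ‖x‖ ∂μ =
      finrank ℝ E • μ.real (ball 0 1) • ∫ y in Ioo 0 r, y ^ (finrank ℝ E - 1) • f y := by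
  have h_ball : ∫ x in ball (0 : E) r, f ‖x‖ ∂μ = ∫ x, (Iio r).indicator f ‖x‖ ∂μ := by
    rw [← integral_indicator measurableSet_ball]
    congr 1 with x
    by_cases hx : ‖x‖ < r <;> simp [indicator, hx]
  have h_radial : ∫ y in Ioi 0, y ^ (finrank ℝ E - 1) • (Iio r).indicator f y =
      ∫ y in Ioo 0 r, y ^ (finrank ℝ E - 1) • f y := by
    rw [← Ioi_inter_Iio, ← setIntegral_indicator measurableSet_Iio]
    congr 1 with y
    by_cases hy : y < r <;> simp [indicator, hy]
  rw [h_ball, integral_fun_norm_addHaar, h_radial]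

end RadialIntegral

section LogBubble

variable {E : Type*} [NormedAddCommGroup E] [InnerProductSpace ℝ E] {c : ℝ}

noncomputable def logBubble (c : ℝ) (y : E) : ℝ := 2 * log (1 + c * ‖y‖ ^ 2)

lemma hasFDerivAt_logBubble (hc : 0 ≤ c) (y : E) :
    HasFDerivAt (logBubble c) ((4 * c / (1 + c * ‖y‖ ^ 2)) • innerSL ℝ y) y := by
  have h_norm_sq : HasFDerivAt (fun y : E => 1 + c * ‖y‖ ^ 2) (c • 2 • innerSL ℝ y) y :=
    (((hasFDerivAt_id y).norm_sq).const_mul c).const_add 1 |>.congr_fderiv (by simp)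
  refine ((h_norm_sq.log (by positivity)).const_mul 2).congr_fderiv ?_
  ext v
  simp only [smul_smul, _root_.smul_apply, coe_innerSL_apply, nsmul_eq_mul,
    Nat.cast_ofNat, smul_eq_mul, div_eq_mul_inv]
  ring

lemma differentiable_logBubble (hc : 0 ≤ c) : Differentiable ℝ (logBubble c : E → ℝ) :=
  fun y => (hasFDerivAt_logBubble hc y).differentiableAt

lemma norm_fderiv_logBubble (hc : 0 ≤ c) (y : E) :
    ‖fderiv ℝ (logBubble c) y‖ = 4 * c * ‖y‖ / (1 + c * ‖y‖ ^ 2) := by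
  rw [(hasFDerivAt_logBubble hc y).fderiv, norm_smul, innerSL_apply_norm, Real.norm_eq_abs,
    abs_of_nonneg (by positivity)]
  ring

lemma integral_radial_energy_logBubble (hc : 0 ≤ c) {R : ℝ} (hR : 0 ≤ R) :
    ∫ r in Ioo 0 R, r * (4 * c * r / (1 + c * r ^ 2)) ^ 2 =
      8 * (log (1 + c * R ^ 2) + (1 + c * R ^ 2)⁻¹ - 1) := by
  have h_primitive : ∀ r : ℝ, HasDerivAt (fun r => 8 * (log (1 + c * r ^ 2) + (1 + c * r ^ 2)⁻¹))
      (r * (4 * c * r / (1 + c * r ^ 2)) ^ 2) r := by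
    intro r
    have hne : 1 + c * r ^ 2 ≠ 0 := by positivity
    have h_inner : HasDerivAt (fun r : ℝ => 1 + c * r ^ 2) (c * (2 * r)) r := by
      simpa using ((hasDerivAt_pow 2 r).const_mul c).const_add 1
    refine (((h_inner.log hne).add (h_inner.inv hne)).const_mul 8).congr_deriv ?_
    field_simp
    ring
  have h_cont : Continuous fun r : ℝ => r * (4 * c * r / (1 + c * r ^ 2)) ^ 2 := by
    have hne (r : ℝ) : 1 + c * r ^ 2 ≠ 0 := by positivity
    fun_prop (disch := exact hne _)
  rw [← integral_Ioc_eq_integral_Ioo, ← intervalIntegral.integral_of_le hR,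
    intervalIntegral.integral_eq_sub_of_hasDerivAt (fun r _ => h_primitive r)
      (h_cont.intervalIntegrable _ _)]
  simp only [ne_eq, OfNat.ofNat_ne_zero, not_false_eq_true, zero_pow, mul_zero, add_zero, log_one,
    inv_one]
  ring

lemma setIntegral_ball_norm_fderiv_logBubble_sq [FiniteDimensional ℝ E] [MeasurableSpace E]
    [BorelSpace E] (hE : finrank ℝ E = 2) (hc : 0 ≤ c) {R : ℝ} (hR : 0 ≤ R) :
    ∫ y in ball (0 : E) R, ‖fderiv ℝ (logBubble c) y‖ ^ 2 =
      16 * π * (log (1 + c * R ^ 2) + (1 + c * R ^ 2)⁻¹ - 1) := by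
  have : Nontrivial E := finrank_pos_iff.mp (by rw [hE]; norm_num)
  have h_unit_ball : volume.real (ball (0 : E) 1) = π := by
    simp [measureReal_def, InnerProductSpace.volume_ball_of_dim_even (k := 1) hE, pi_nonneg]
  simp_rw [norm_fderiv_logBubble hc]
  rw [setIntegral_ball_fun_norm_addHaar volume (fun r => (4 * c * r / (1 + c * r ^ 2)) ^ 2),
    hE, h_unit_ball]
  simp only [Nat.reduceSub, pow_one, smul_eq_mul, integral_radial_energy_logBubble hc hR]
  ring

end LogBubble

theorem bubble_dirichlet_energy_general (lam R : ℝ) (hR : 0 < R) :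
    Differentiable ℝ
      (fun y : EuclideanSpace ℝ (Fin 2) => 2 * Real.log (1 + lam ^ 2 * ‖y‖ ^ 2)) ∧
    ∫ y in Metric.ball (0 : EuclideanSpace ℝ (Fin 2)) R,
        ‖fderiv ℝ (fun y : EuclideanSpace ℝ (Fin 2) =>
            2 * Real.log (1 + lam ^ 2 * ‖y‖ ^ 2)) y‖ ^ 2 =
      16 * Real.pi *
        (Real.log (1 + lam ^ 2 * R ^ 2) + (1 + lam ^ 2 * R ^ 2)⁻¹ - 1) :=
  ⟨differentiable_logBubble (sq_nonneg lam),
    setIntegral_ball_norm_fderiv_logBubble_sq finrank_euclideanSpace_fin (sq_nonneg lam) hR.le⟩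

theorem bubble_dirichlet_energy (lam R : ℝ) (hlam : 0 < lam) (hR : 0 < R) :
    Differentiable ℝ
      (fun y : EuclideanSpace ℝ (Fin 2) => 2 * Real.log (1 + lam ^ 2 * ‖y‖ ^ 2)) ∧
    ∫ y in Metric.ball (0 : EuclideanSpace ℝ (Fin 2)) R,
        ‖fderiv ℝ (fun y : EuclideanSpace ℝ (Fin 2) =>
            2 * Real.log (1 + lam ^ 2 * ‖y‖ ^ 2)) y‖ ^ 2 =
      16 * Real.pi *
        (Real.log (1 + lam ^ 2 * R ^ 2) + (1 + lam ^ 2 * R ^ 2)⁻¹ - 1) :=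
  bubble_dirichlet_energy_general lam R hR
end
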